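/- arXiv:1308.4500 — 4 statements merged into one kernel-verified Lean document; each statement's English description precedes it below -/
import Mathlib

section
/- Let (U, ∘) be a loop with identity element e, let B ⊆ U \ {e}, and let η : U → U be a bijection with η(e) = e. Define a new binary operation ∘' on U by x ∘' y = x ∘ y if y ∉ B, and x ∘' y = y ∘ η(x) if y ∈ B. Then (U, ∘') is a right loop with identity e; that is, e ∘' x = x ∘' e = x for all x ∈ U, and for all x, y ∈ U the equation X ∘' x = y has a unique solution X in U. -/
/-!
Solving `X ∘' x = y` means inverting `X ↦ X ∘' x`. For `x ∉ B` this map is right multiplication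
by `x` in the loop; for `x ∈ B` it is `η` followed by left multiplication by `x`. Both are
bijections, the first by right division and the second by left division in `(U, ∘)`.
Since `e ∉ B` and `η e = e`, the identity of `∘` remains one for `∘'`.
-/

open Function

namespace ModifiedLoop

variable {U : Type*} {op op' : U → U → U} {B : Set U} {η : U → U}

theorem mul_right_eq_of_not_mem
    (hop' : ∀ x y : U, (y ∉ B → op' x y = op x y) ∧ (y ∈ B → op' x y = op y (η x)))
    {x : U} (hx : x ∉ B) : (op' · x) = (op · x) :=
  funext fun X => (hop' X x).1 hx

theorem mul_right_eq_of_mem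
    (hop' : ∀ x y : U, (y ∉ B → op' x y = op x y) ∧ (y ∈ B → op' x y = op y (η x)))
    {x : U} (hx : x ∈ B) : (op' · x) = op x ∘ η :=
  funext fun X => (hop' X x).2 hx

theorem bijective_mul_right
    (hright : ∀ x y : U, ∃! X, op X x = y) (hleft : ∀ x y : U, ∃! X, op x X = y)
    (hη : Bijective η)
    (hop' : ∀ x y : U, (y ∉ B → op' x y = op x y) ∧ (y ∈ B → op' x y = op y (η x)))
    (x : U) : Bijective (op' · x) := by
  by_cases hx : x ∈ B
  · rw [mul_right_eq_of_mem hop' hx]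
    exact ((bijective_iff_existsUnique _).2 (hleft x)).comp hη
  · rw [mul_right_eq_of_not_mem hop' hx]
    exact (bijective_iff_existsUnique _).2 (hright x)

theorem one_mul_and_mul_one {e : U} (hid : ∀ x, op e x = x ∧ op x e = x) (heB : e ∉ B)
    (hηe : η e = e)
    (hop' : ∀ x y : U, (y ∉ B → op' x y = op x y) ∧ (y ∈ B → op' x y = op y (η x)))
    (x : U) : op' e x = x ∧ op' x e = x := by
  refine ⟨?_, by rw [(hop' x e).1 heB, (hid x).2]⟩
  by_cases hx : x ∈ B
  · rw [(hop' e x).2 hx, hηe, (hid x).2]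
  · rw [(hop' e x).1 hx, (hid x).1]

end ModifiedLoop

/-- Let (U, ∘) be a loop with identity e, B ⊆ U \ {e}, and η : U → U a
bijection with η(e) = e. Define x ∘' y = x ∘ y if y ∉ B, and x ∘' y = y ∘ η(x) if y ∈ B.
Then (U, ∘') is a right loop with identity e. -/
theorem modified_loop_is_right_loop {U : Type*} (op : U → U → U) (e : U)
    (hid : ∀ x, op e x = x ∧ op x e = x)
    (hright : ∀ x y : U, ∃! X, op X x = y)
    (hleft : ∀ x y : U, ∃! X, op x X = y)
    (B : Set U) (hB : B ⊆ {x | x ≠ e})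
    (η : U → U) (hη : Function.Bijective η) (hηe : η e = e)
    (op' : U → U → U)
    (hop' : ∀ x y : U, (y ∉ B → op' x y = op x y) ∧ (y ∈ B → op' x y = op y (η x))) :
    (∀ x, op' e x = x ∧ op' x e = x) ∧ (∀ x y : U, ∃! X, op' X x = y) := by
  have heB : e ∉ B := fun he => hB he rfl
  exact ⟨ModifiedLoop.one_mul_and_mul_one hid heB hηe hop',
    fun x => (Function.bijective_iff_existsUnique _).1
      (ModifiedLoop.bijective_mul_right hright hleft hη hop' x)⟩
end

section
/- Let (L, ⋆) be an inverse property loop with identity 1, and let a, b ∈ L with 1/a ≠ 1 and b ≠ 1. Set B = {1/a, b} ⊆ L \ {1}, let η : L → L be a bijection with η(1) = 1, and define x ∘' y = x ⋆ y if y ∉ B and x ∘' y = y ⋆ η(x) if y ∈ B. Then, as bijections of L, R_b^{∘'} ∘ (R_{1/a}^{∘'})⁻¹ ∘ R_b^{∘'} ∘ (R_{1/a}^{∘'})⁻¹ = L_b^⋆ ∘ L_a^⋆ ∘ L_b^⋆ ∘ L_a^⋆, where R_u^{∘'}(x) = x ∘' u and L_u^⋆(x) = u ⋆ x. -/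
/-! For `u ∈ B` the modified right translation is `R_u^{∘'} = L_u ∘ η`, so
`R_v^{∘'} ∘ (R_u^{∘'})⁻¹ = L_v ∘ η ∘ η⁻¹ ∘ L_u⁻¹ = L_v ∘ L_{u⁻¹}` for `u, v ∈ B`; the factors
`η` cancel. In an I.P. loop `(1/a)⁻¹ = a`, so with `u = 1/a` and `v = b` this is `L_b ∘ L_a`,
and the claim is its square. -/

section InverseProperty

variable {L : Type*} {op : L → L → L} {inv : L → L}

theorem inv_eq_of_op_eq_one_right {one : L} (hone : ∀ x, op x one = x)
    (hinv_left : ∀ x y, op (inv x) (op x y) = y) {u v : L} (h : op u v = one) : inv u = v := by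
  simpa only [h, hone] using hinv_left u v

theorem rightTranslate_comp_rightInverse_eq_leftTranslate (hinv_left : ∀ x y, op (inv x) (op x y) = y)
    {op' : L → L → L} {η g : L → L} {u v : L}
    (hu : ∀ x, op' x u = op u (η x)) (hv : ∀ x, op' x v = op v (η x))
    (hg : ∀ x, op' (g x) u = x) (y : L) :
    op' (g y) v = op v (op (inv u) y) := by
  conv_rhs => rw [← hg y, hu, hinv_left]
  exact hv (g y)

end InverseProperty

theorem modified_op_alpha_eq_left_translations_general {L : Type*} (op : L → L → L) (one : L)
    (hid : ∀ x, op one x = x ∧ op x one = x)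
    (rdiv : L → L → L)
    (hrdiv : ∀ x y : L, op (rdiv y x) x = y)
    (inv : L → L)
    (hinv_left : ∀ x y : L, op (inv x) (op x y) = y)
    (a b : L)
    (η : L → L)
    (op' : L → L → L)
    (hop' : ∀ x y : L, (y ∉ ({rdiv one a, b} : Set L) → op' x y = op x y) ∧
      (y ∈ ({rdiv one a, b} : Set L) → op' x y = op y (η x)))
    (g : L → L)
    (hg_right : ∀ x : L, op' (g x) (rdiv one a) = x) :
    ∀ x : L, op' (g (op' (g x) b)) b = op b (op a (op b (op a x))) := by
  have hinv : inv (rdiv one a) = a :=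
    inv_eq_of_op_eq_one_right (fun x => (hid x).2) hinv_left (hrdiv a one)
  have hstep : ∀ y, op' (g y) b = op b (op a y) := by
    intro y
    rw [← hinv]
    exact rightTranslate_comp_rightInverse_eq_leftTranslate hinv_left
      (fun x => (hop' x _).2 (Set.mem_insert _ _))
      (fun x => (hop' x _).2 (Set.mem_insert_of_mem _ rfl)) hg_right y
  intro x
  rw [hstep, hstep]

/-- Let (L, ⋆) be an I.P. loop with identity 1, a, b ∈ L with 1/a ≠ 1 and
b ≠ 1, B = {1/a, b}, η a bijection fixing 1, and ∘' the modified operation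
(x ∘' y = x ⋆ y if y ∉ B, x ∘' y = y ⋆ η(x) if y ∈ B).  Then, as bijections of L,
R_b^{∘'} ∘ (R_{1/a}^{∘'})⁻¹ ∘ R_b^{∘'} ∘ (R_{1/a}^{∘'})⁻¹ = L_b ∘ L_a ∘ L_b ∘ L_a.
Here g denotes the two-sided inverse of the bijection R_{1/a}^{∘'}. -/
theorem modified_op_alpha_eq_left_translations {L : Type*} (op : L → L → L) (one : L)
    (hid : ∀ x, op one x = x ∧ op x one = x)
    (hright : ∀ x y : L, ∃! X, op X x = y)
    (hleft : ∀ x y : L, ∃! X, op x X = y)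
    (rdiv : L → L → L)
    (hrdiv : ∀ x y : L, op (rdiv y x) x = y)
    (hrdiv_uniq : ∀ x y X : L, op X x = y → X = rdiv y x)
    (inv : L → L)
    (hinv_left : ∀ x y : L, op (inv x) (op x y) = y)
    (hinv_right : ∀ x y : L, op (op y x) (inv x) = y)
    (a b : L) (ha : rdiv one a ≠ one) (hb : b ≠ one)
    (η : L → L) (hη : Function.Bijective η) (hηe : η one = one)
    (op' : L → L → L)
    (hop' : ∀ x y : L, (y ∉ ({rdiv one a, b} : Set L) → op' x y = op x y) ∧
      (y ∈ ({rdiv one a, b} : Set L) → op' x y = op y (η x)))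
    (g : L → L)
    (hg_right : ∀ x : L, op' (g x) (rdiv one a) = x)
    (hg_left : ∀ x : L, g (op' x (rdiv one a)) = x) :
    ∀ x : L, op' (g (op' (g x) b)) b = op b (op a (op b (op a x))) :=
  modified_op_alpha_eq_left_translations_general op one hid rdiv hrdiv inv hinv_left a b η op' hop'
    g hg_right
end

section
/- Let B ⊆ ℤ \ {0} and define a binary operation ∘' on ℤ by i ∘' j = i + j if j ∉ B, and i ∘' j = j − i if j ∈ B. Then (ℤ, ∘') is a right loop with identity 0: one has 0 ∘' i = i ∘' 0 = i for all i ∈ ℤ, and for all i, j ∈ ℤ the equation X ∘' i = j has a unique solution X ∈ ℤ (namely X = j − i if i ∉ B and X = i − j if i ∈ B). -/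
/-! Right multiplication by `i` is the translation `X ↦ X + i` off `B` and the reflection
`X ↦ i - X` on `B`; both are bijections, and `0 ∉ B` makes `0` a two-sided identity. -/

section ModifiedOp

variable {G : Type*} [AddCommGroup G] (B : Set G)

open Classical in
noncomputable def modifiedOp (i j : G) : G := if j ∈ B then j - i else i + j

variable {B}

theorem eq_modifiedOp {op' : G → G → G}
    (hop' : ∀ i j : G, (j ∉ B → op' i j = i + j) ∧ (j ∈ B → op' i j = j - i)) :
    op' = modifiedOp B := by
  funext i j
  by_cases hj : j ∈ B
  · rw [modifiedOp, if_pos hj, (hop' i j).2 hj]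
  · rw [modifiedOp, if_neg hj, (hop' i j).1 hj]

theorem modifiedOp_of_notMem {j : G} (hj : j ∉ B) (i : G) : modifiedOp B i j = i + j :=
  if_neg hj

theorem modifiedOp_of_mem {j : G} (hj : j ∈ B) (i : G) : modifiedOp B i j = j - i :=
  if_pos hj

theorem modifiedOp_zero_left (i : G) : modifiedOp B 0 i = i := by
  by_cases hi : i ∈ B
  · rw [modifiedOp_of_mem hi, sub_zero]
  · rw [modifiedOp_of_notMem hi, zero_add]

theorem modifiedOp_zero_right (h0 : (0 : G) ∉ B) (i : G) : modifiedOp B i 0 = i := by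
  rw [modifiedOp_of_notMem h0, add_zero]

theorem modifiedOp_sub_left_of_notMem {i : G} (hi : i ∉ B) (j : G) :
    modifiedOp B (j - i) i = j := by
  rw [modifiedOp_of_notMem hi, sub_add_cancel]

theorem modifiedOp_sub_right_of_mem {i : G} (hi : i ∈ B) (j : G) :
    modifiedOp B (i - j) i = j := by
  rw [modifiedOp_of_mem hi, sub_sub_cancel]

theorem modifiedOp_left_injective (i : G) : Function.Injective (modifiedOp B · i) := by
  by_cases hi : i ∈ B
  · simpa only [modifiedOp_of_mem hi] using sub_right_injective
  · simpa only [modifiedOp_of_notMem hi] using add_left_injective i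

theorem existsUnique_modifiedOp_eq (i j : G) : ∃! X, modifiedOp B X i = j := by
  refine existsUnique_of_exists_of_unique ?_ fun _ _ hX hY ↦
    modifiedOp_left_injective i (hX.trans hY.symm)
  by_cases hi : i ∈ B
  · exact ⟨i - j, modifiedOp_sub_right_of_mem hi j⟩
  · exact ⟨j - i, modifiedOp_sub_left_of_notMem hi j⟩

end ModifiedOp

/-- Let B ⊆ ℤ \ {0} and define i ∘' j = i + j if j ∉ B, i ∘' j = j - i
if j ∈ B.  Then (ℤ, ∘') is a right loop with identity 0, and the unique solution of
X ∘' i = j is X = j - i if i ∉ B and X = i - j if i ∈ B. -/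
theorem int_modified_right_loop (B : Set ℤ) (hB : B ⊆ {i | i ≠ 0})
    (op' : ℤ → ℤ → ℤ)
    (hop' : ∀ i j : ℤ, (j ∉ B → op' i j = i + j) ∧ (j ∈ B → op' i j = j - i)) :
    (∀ i : ℤ, op' 0 i = i ∧ op' i 0 = i) ∧
    (∀ i j : ℤ, ∃! X : ℤ, op' X i = j) ∧
    (∀ i j : ℤ, (i ∉ B → op' (j - i) i = j) ∧ (i ∈ B → op' (i - j) i = j)) := by
  obtain rfl := eq_modifiedOp hop'
  have h0 : (0 : ℤ) ∉ B := fun h ↦ hB h rfl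
  exact ⟨fun i ↦ ⟨modifiedOp_zero_left i, modifiedOp_zero_right h0 i⟩,
    existsUnique_modifiedOp_eq,
    fun i j ↦ ⟨(modifiedOp_sub_left_of_notMem · j), (modifiedOp_sub_right_of_mem · j)⟩⟩
end

section
/- In the infinite dihedral group D_∞ = DihedralGroup 0 with H = {r 0, sr 0}, a subset T ⊆ D_∞ containing the identity r 0 is a normalized right transversal of H (i.e., T contains exactly one element of each right coset of H and r 0 ∈ T) if and only if there exists a (unique) subset B ⊆ ℤ \ {0} such that T = {r i : i ∉ B} ∪ {sr i : i ∈ B}. -/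
/-! The right coset of `H` through `r i` or `sr i` is `{r i, sr i}`, and `T` meets a two-point set
in exactly one point iff it contains exactly one of the two. So `T` is a right transversal iff
`r i ∈ T ↔ sr i ∉ T` for every `i`, i.e. iff `T = T_B` for `B = {i | sr i ∈ T}`, which is the only
possible `B` since `B ↦ T_B` is injective; normalization `r 0 ∈ T` is then `0 ∉ B`. -/

/-- The subgroup `H = {r 0, sr 0}` of `DihedralGroup 0`, as a set. -/
def Hset : Set (DihedralGroup 0) := {DihedralGroup.r 0, DihedralGroup.sr 0}

/-- The normalized right transversal of `Hset` determined by `B ⊆ ℤ \ {0}`: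
`T_B = {r i : i ∉ B} ∪ {sr i : i ∈ B}`. -/
def TB (B : Set ℤ) : Set (DihedralGroup 0) :=
  {x | match x with
    | .r i => i ∉ B
    | .sr i => i ∈ B}

open DihedralGroup

theorem existsUnique_mem_and_eq_or_eq_iff {α : Type*} {T : Set α} {a b : α} (hab : a ≠ b) :
    (∃! t, t ∈ T ∧ (t = a ∨ t = b)) ↔ (a ∈ T ↔ b ∉ T) := by
  constructor
  · rintro ⟨t, ⟨htT, hta | htb⟩, huniq⟩
    · subst hta
      exact ⟨fun _ hb => hab (huniq b ⟨hb, .inr rfl⟩).symm, fun _ => htT⟩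
    · subst htb
      exact ⟨fun ha => absurd (huniq a ⟨ha, .inl rfl⟩) hab, fun hb => absurd htT hb⟩
  · intro h
    by_cases ha : a ∈ T
    · exact ⟨a, ⟨ha, .inl rfl⟩,
        fun t ⟨htT, ht⟩ => ht.resolve_right (by rintro rfl; exact h.1 ha htT)⟩
    · exact ⟨b, ⟨not_not.1 (mt h.2 ha), .inr rfl⟩,
        fun t ⟨htT, ht⟩ => ht.resolve_left (by rintro rfl; exact ha htT)⟩

theorem exists_Hset_mul_r_iff (t : DihedralGroup 0) (i : ZMod 0) :
    (∃ h ∈ Hset, t = h * r i) ↔ t = r i ∨ t = sr i := by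
  simp [Hset, sr_mul_r]

theorem exists_Hset_mul_sr_iff (t : DihedralGroup 0) (i : ZMod 0) :
    (∃ h ∈ Hset, t = h * sr i) ↔ t = r i ∨ t = sr i := by
  simp [Hset, sr_mul_sr, or_comm]

theorem forall_existsUnique_Hset_mul_iff (T : Set (DihedralGroup 0)) :
    (∀ x, ∃! t, t ∈ T ∧ ∃ h ∈ Hset, t = h * x) ↔ ∀ i, r i ∈ T ↔ sr i ∉ T := by
  have hcoset (i : ZMod 0) : (∃! t, t ∈ T ∧ (t = r i ∨ t = sr i)) ↔ (r i ∈ T ↔ sr i ∉ T) :=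
    existsUnique_mem_and_eq_or_eq_iff nofun
  constructor
  · intro h i
    exact (hcoset i).1 (by simpa only [exists_Hset_mul_r_iff] using h (r i))
  · rintro h (i | i)
    · simpa only [exists_Hset_mul_r_iff] using (hcoset i).2 (h i)
    · simpa only [exists_Hset_mul_sr_iff] using (hcoset i).2 (h i)

theorem mem_TB_r {B : Set ℤ} {i : ZMod 0} : r i ∈ TB B ↔ i ∉ B := Iff.rfl

theorem mem_TB_sr {B : Set ℤ} {i : ZMod 0} : sr i ∈ TB B ↔ i ∈ B := Iff.rfl

theorem TB_injective : Function.Injective TB :=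
  fun _ _ h => Set.ext fun i => Set.ext_iff.1 h (sr i)

theorem forall_r_mem_iff_sr_not_mem_iff_eq_TB (T : Set (DihedralGroup 0)) :
    (∀ i, r i ∈ T ↔ sr i ∉ T) ↔ T = TB {i | sr i ∈ T} := by
  constructor
  · intro h
    ext (i | i)
    exacts [h i, Iff.rfl]
  · intro h i
    rw [h, mem_TB_r, mem_TB_sr]

/-- A subset T of D_∞ = DihedralGroup 0 is a normalized right transversal
of H = {r 0, sr 0} (contains the identity r 0 and exactly one element of each right
coset of H) iff there is a unique B ⊆ ℤ \ {0} with T = {r i : i ∉ B} ∪ {sr i : i ∈ B}. -/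
theorem dihedral_nrt_iff (T : Set (DihedralGroup 0)) :
    (DihedralGroup.r 0 ∈ T ∧
      ∀ x : DihedralGroup 0, ∃! t : DihedralGroup 0, t ∈ T ∧ ∃ h ∈ Hset, t = h * x) ↔
    ∃! B : Set ℤ, B ⊆ {i | i ≠ 0} ∧ T = TB B := by
  rw [forall_existsUnique_Hset_mul_iff, forall_r_mem_iff_sr_not_mem_iff_eq_TB]
  constructor
  · rintro ⟨h0, hT⟩
    have h0B : (0 : ℤ) ∉ {i | sr i ∈ T} := mem_TB_r.1 (hT ▸ h0)
    refine ⟨_, ⟨?_, hT⟩, fun B hB => TB_injective (hB.2.symm.trans hT)⟩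
    rintro i hi rfl
    exact h0B hi
  · rintro ⟨B, ⟨hB0, rfl⟩, -⟩
    refine ⟨mem_TB_r.2 fun h => hB0 h rfl, ?_⟩
    ext (i | i) <;> rfl
end
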